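/- Let Φ : ℝ² → ℝ be continuously differentiable, bounded, and satisfy the non-degeneracy condition: for every nonzero y ∈ ℝ² there exist z ∈ ℝ² and c ∈ ℝ with Φ(z + c·y) ≠ Φ(z). Then the real linear span of the set of normal vectors {(−∂₁Φ(x̄), −∂₂Φ(x̄), 1) : x̄ ∈ ℝ²} is all of ℝ³. -/

import Mathlib

/-- For a `C¹`, bounded, non-degenerate `Φ : ℝ² → ℝ`, the linear span
of the normal vectors `(−∂₁Φ(x̄), −∂₂Φ(x̄), 1)` is all of `ℝ³`. -/
theorem stmt_3 (Φ : (Fin 2 → ℝ) → ℝ) (hΦ : ContDiff ℝ 1 Φ)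
    (hbd : ∃ C : ℝ, ∀ x, |Φ x| ≤ C)
    (hnd : ∀ y : Fin 2 → ℝ, y ≠ 0 → ∃ (z : Fin 2 → ℝ) (c : ℝ), Φ (z + c • y) ≠ Φ z) :
    Submodule.span ℝ
      {v : Fin 3 → ℝ | ∃ x : Fin 2 → ℝ,
        v = ![-(fderiv ℝ Φ x (Pi.single 0 1)), -(fderiv ℝ Φ x (Pi.single 1 1)), 1]} = ⊤ := by
  by_contra hne
  obtain ⟨f, hf0, hmap⟩ := Submodule.exists_dual_map_eq_bot_of_lt_top
    (lt_top_iff_ne_top.mpr hne) inferInstance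
  have hvanish : ∀ x : Fin 2 → ℝ,
      f ![-(fderiv ℝ Φ x (Pi.single 0 1)), -(fderiv ℝ Φ x (Pi.single 1 1)), 1] = 0 := by
    intro x
    have hmem : (![-(fderiv ℝ Φ x (Pi.single 0 1)), -(fderiv ℝ Φ x (Pi.single 1 1)), 1] :
        Fin 3 → ℝ) ∈ Submodule.span ℝ
        {v : Fin 3 → ℝ | ∃ x : Fin 2 → ℝ,
          v = ![-(fderiv ℝ Φ x (Pi.single 0 1)), -(fderiv ℝ Φ x (Pi.single 1 1)), 1]} :=
      Submodule.subset_span ⟨x, rfl⟩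
    have : f _ ∈ Submodule.map f (Submodule.span ℝ _) := Submodule.mem_map_of_mem hmem
    rw [hmap] at this
    simpa using this
  set a := f (Pi.single 0 1) with ha
  set b := f (Pi.single 1 1) with hb
  set c := f (Pi.single 2 1) with hc
  have hkey : ∀ x : Fin 2 → ℝ,
      a * fderiv ℝ Φ x (Pi.single 0 1) + b * fderiv ℝ Φ x (Pi.single 1 1) = c := by
    intro x
    have hsingle : ∀ i : Fin 3, (Pi.single i 1 : Fin 3 → ℝ) = fun j => if i = j then 1 else 0 :=
      fun i => funext fun j => by rw [Pi.single_apply]; simp [eq_comm]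
    have h := hvanish x
    rw [LinearMap.pi_apply_eq_sum_univ, Fin.sum_univ_three,
      ← hsingle 0, ← hsingle 1, ← hsingle 2] at h
    simp only [Matrix.cons_val_zero, Matrix.cons_val_one, Matrix.head_cons,
      Matrix.cons_val_two, Matrix.tail_cons, smul_eq_mul] at h
    rw [← ha, ← hb, ← hc] at h
    linarith
  -- the direction y
  by_cases hab : a = 0 ∧ b = 0
  · -- then c = 0 so f = 0
    obtain ⟨ha0, hb0⟩ := hab
    have hc0 : c = 0 := by have := hkey 0; rw [ha0, hb0] at this; linarith
    apply hf0
    have hsingle : ∀ i : Fin 3, (Pi.single i 1 : Fin 3 → ℝ) = fun j => if i = j then 1 else 0 :=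
      fun i => funext fun j => by rw [Pi.single_apply]; simp [eq_comm]
    refine LinearMap.ext fun v => ?_
    rw [LinearMap.pi_apply_eq_sum_univ, Fin.sum_univ_three,
      ← hsingle 0, ← hsingle 1, ← hsingle 2, ← ha, ← hb, ← hc, ha0, hb0, hc0]
    simp
  · have hy : (![a, b] : Fin 2 → ℝ) ≠ 0 := by
      intro h
      apply hab
      constructor
      · have := congrFun h 0; simpa using this
      · have := congrFun h 1; simpa using this
    set y : Fin 2 → ℝ := ![a, b] with hy'
    have hyd : y = a • (Pi.single 0 1 : Fin 2 → ℝ) + b • (Pi.single 1 1 : Fin 2 → ℝ) := by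
      funext i
      fin_cases i <;> simp [hy', Pi.single_apply]
    -- derivative of Φ along y is c everywhere
    have hdir : ∀ x : Fin 2 → ℝ, fderiv ℝ Φ x y = c := by
      intro x
      rw [hyd]
      rw [map_add, map_smul, map_smul]
      simpa using hkey x
    have hdiff : Differentiable ℝ Φ := hΦ.differentiable one_ne_zero
    -- along each line, Φ (z + t • y) = Φ z + c * t
    have hline : ∀ (z : Fin 2 → ℝ) (t : ℝ), Φ (z + t • y) = Φ z + c * t := by
      intro z t
      have hg : ∀ s : ℝ, HasDerivAt (fun u : ℝ => Φ (z + u • y)) c s := by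
        intro s
        have h1 : HasDerivAt (fun u : ℝ => z + u • y) y s := by
          simpa using ((hasDerivAt_id s).smul_const y).const_add z
        have h2 := (hdiff (z + s • y)).hasFDerivAt
        have := h2.comp_hasDerivAt s h1
        simpa [hdir, Function.comp_def] using this
      have hh : ∀ s : ℝ, HasDerivAt (fun u : ℝ => Φ (z + u • y) - c * u) 0 s := by
        intro s
        simpa [Pi.sub_def] using (hg s).sub ((hasDerivAt_id s).const_mul c)
      have hconst : ∀ s : ℝ, Φ (z + s • y) - c * s = Φ (z + (0:ℝ) • y) - c * 0 := by
        intro s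
        exact is_const_of_deriv_eq_zero (fun u => (hh u).differentiableAt)
          (fun u => (hh u).deriv) s 0
      have := hconst t
      simp only [zero_smul, add_zero, mul_zero, sub_zero] at this
      linarith
    -- c = 0 by boundedness
    obtain ⟨C, hC⟩ := hbd
    have hc0 : c = 0 := by
      by_contra hcne
      have ht := hline 0 ((2 * C + 1) / c)
      have h1 := hC 0
      have h2 := hC (0 + ((2 * C + 1) / c) • y)
      rw [ht, mul_div_cancel₀ _ hcne] at h2
      have hC0 : 0 ≤ C := le_trans (abs_nonneg _) h1
      rw [abs_le] at h1 h2
      linarith [h1.1, h1.2, h2.1, h2.2]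
    obtain ⟨z, t, hzt⟩ := hnd y hy
    exact hzt (by rw [hline z t, hc0]; ring)
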